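/- arXiv:2404.06839 — 6 statements merged into one kernel-verified Lean document; each statement's English description precedes it below -/
import Mathlib

section
/- Let n be an odd positive integer, z > 0 a real number, θ ∈ (0, π), and w = cos θ. Define the polynomial P_n(s) = (s+r)^n - 2w(-iz)^n + (-1)^n (r-s)^n where r = sqrt(s^2+z^2) (note P_n is a polynomial in s of degree n since only even powers of r appear after expansion). Then for each l ∈ {0, 1, ..., n-1}, the point s_l = -iz cos((θ + 2πl)/n) is a root of P_n. -/
/-!
Put `c = -iz`, `s = c cos φ` with `φ = (θ + 2πl)/n`, `X = s + r` and `Y = s - r`, so that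
`(-1)^n (r - s)^n = Y^n`. Since `r² = s² + z²`, we get `X Y = c²` and `X + Y = 2 c cos φ`, so `X` and `Y`
are the roots `c e^{±iφ}` of `t² - 2c cos φ t + c²`. Hence `X^n + Y^n = 2 c^n cos(nφ) = 2 c^n cos θ`.
-/

open Complex

theorem pow_add_pow_of_eq_mul_exp {X Y c φ : ℂ} (hX : X = c * exp (φ * I))
    (hY : Y = c * exp (-φ * I)) (n : ℕ) : X ^ n + Y ^ n = 2 * c ^ n * cos (n * φ) := by
  have hpos : (n : ℂ) * (φ * I) = n * φ * I := by ring
  have hneg : (n : ℂ) * (-φ * I) = -(n * φ) * I := by ring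
  rw [hX, hY, mul_pow, mul_pow, ← exp_nat_mul, ← exp_nat_mul, hpos, hneg]
  linear_combination -c ^ n * two_cos (n * φ)

theorem pow_add_pow_of_mul_eq_of_add_eq {X Y c φ : ℂ} (hmul : X * Y = c ^ 2)
    (hadd : X + Y = 2 * c * cos φ) (n : ℕ) : X ^ n + Y ^ n = 2 * c ^ n * cos (n * φ) := by
  have hexp : exp (φ * I) * exp (-φ * I) = 1 := by
    rw [← exp_add, neg_mul, add_neg_cancel, exp_zero]
  have hroots : (X - c * exp (φ * I)) * (X - c * exp (-φ * I)) = 0 := by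
    have hY : Y = 2 * c * cos φ - X := by linear_combination hadd
    rw [hY] at hmul
    linear_combination -hmul + c ^ 2 * hexp + c * X * two_cos φ
  rcases mul_eq_zero.mp hroots with hX | hX
  · exact pow_add_pow_of_eq_mul_exp (sub_eq_zero.mp hX)
      (by linear_combination hadd - hX + c * two_cos φ) n
  · rw [← cos_neg, ← mul_neg]
    exact pow_add_pow_of_eq_mul_exp (φ := -φ) (sub_eq_zero.mp hX)
      (by rw [neg_neg]; linear_combination hadd - hX + c * two_cos φ) n

theorem root_of_Pn_general (n : ℕ) (hn : 0 < n) (z θ : ℝ) (l : ℕ) (r : ℂ)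
    (hr : r ^ 2 =
      (-Complex.I * (z : ℂ) * (Real.cos ((θ + 2 * Real.pi * l) / n) : ℝ)) ^ 2 + (z : ℂ) ^ 2) :
    (-Complex.I * (z : ℂ) * (Real.cos ((θ + 2 * Real.pi * l) / n) : ℝ) + r) ^ n
      - 2 * (Real.cos θ : ℂ) * (-Complex.I * (z : ℂ)) ^ n
      + (-1 : ℂ) ^ n *
        (r - (-Complex.I * (z : ℂ) * (Real.cos ((θ + 2 * Real.pi * l) / n) : ℝ))) ^ n = 0 := by
  set φ : ℝ := (θ + 2 * Real.pi * l) / n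
  set c : ℂ := -I * z
  push_cast at hr ⊢
  have hcos : cos (n * (φ : ℂ)) = cos θ := by
    have hnφ : (n : ℝ) * φ = θ + l * (2 * Real.pi) := by
      rw [mul_div_cancel₀ _ (by positivity)]; ring
    rw [← ofReal_natCast, ← ofReal_mul, hnφ]
    push_cast
    exact cos_add_nat_mul_two_pi _ _
  have hsum := pow_add_pow_of_mul_eq_of_add_eq (X := c * cos φ + r) (Y := c * cos φ - r)
    (c := c) (φ := φ) (by linear_combination -hr - z ^ 2 * I_sq) (by ring) n
  rw [hcos] at hsum
  rw [← mul_pow, neg_one_mul, neg_sub]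
  linear_combination hsum

/-- Let `n` be an odd positive integer, `z > 0`, `θ ∈ (0,π)`, `w = cos θ`.
For each `l ∈ {0,…,n-1}`, the point `s_l = -iz cos((θ+2πl)/n)` is a root of
`P_n(s) = (s+r)^n - 2w(-iz)^n + (-1)^n (r-s)^n`, where `r` is any square root of
`s_l² + z²` (the expression only depends on `r²`). -/
theorem root_of_Pn (n : ℕ) (hodd : Odd n) (hn : 0 < n) (z θ : ℝ) (hz : 0 < z)
    (hθ : θ ∈ Set.Ioo 0 Real.pi) (l : ℕ) (hl : l < n) (r : ℂ)
    (hr : r ^ 2 =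
      (-Complex.I * (z : ℂ) * (Real.cos ((θ + 2 * Real.pi * l) / n) : ℝ)) ^ 2 + (z : ℂ) ^ 2) :
    (-Complex.I * (z : ℂ) * (Real.cos ((θ + 2 * Real.pi * l) / n) : ℝ) + r) ^ n
      - 2 * (Real.cos θ : ℂ) * (-Complex.I * (z : ℂ)) ^ n
      + (-1 : ℂ) ^ n *
        (r - (-Complex.I * (z : ℂ) * (Real.cos ((θ + 2 * Real.pi * l) / n) : ℝ))) ^ n = 0 :=
  root_of_Pn_general n hn z θ l r hr
end

section
/- Let n be an odd positive integer, z > 0, θ ∈ (0, π), w = cos θ. The polynomial P_n(s) := 2 ∑_{k=0}^{⌊n/2⌋} C(n,2k) s^{n-2k} (s^2+z^2)^k - 2w(-iz)^n factors as P_n(s) = 2^n ∏_{l=0}^{n-1} (s + iz cos((θ+2πl)/n)). -/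
/-!
At the points `s = -iz cos φ` one has `s² + z² = (z sin φ)²`, so the even-index binomial sum is
`(s + z sin φ)ⁿ + (s - z sin φ)ⁿ = (-iz)ⁿ (e^{inφ} + e^{-inφ})` and `P_n(s) = 2(-iz)ⁿ (cos nφ - cos θ)`.
Hence `P_n` vanishes at the `n` points `-iz cos ((θ + 2πl)/n)`, which are pairwise distinct since
`z ≠ 0` and `θ` is not a multiple of `π`. A polynomial of degree at most `n` with leading coefficient
`2ⁿ` and these `n` roots is `2ⁿ` times the product of the corresponding linear factors.
-/

open Polynomial Finset

theorem Finset.sum_range_succ_eq_sum_two_mul {M : Type*} [AddCommMonoid M] (f : ℕ → M)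
    (hf : ∀ m, Odd m → f m = 0) (n : ℕ) :
    ∑ m ∈ range (n + 1), f m = ∑ k ∈ range (n / 2 + 1), f (2 * k) := by
  rw [← sum_image (s := range (n / 2 + 1)) (g := (2 * ·)) (by intro _ _ _ _ h; simp only at h; omega)]
  refine (sum_subset ?_ ?_).symm
  · intro m
    simp only [mem_image, mem_range]
    omega
  · intro m _ hm
    refine hf m (Nat.not_even_iff_odd.mp fun ⟨k, hk⟩ => hm (mem_image.mpr ⟨k, ?_, by omega⟩))
    simp only [mem_range] at *
    omega

theorem add_pow_add_sub_pow {R : Type*} [CommRing R] (n : ℕ) (a b : R) :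
    (a + b) ^ n + (a - b) ^ n
      = 2 * ∑ k ∈ range (n / 2 + 1), (n.choose (2 * k) : R) * a ^ (n - 2 * k) * (b ^ 2) ^ k := by
  rw [add_comm a, sub_eq_neg_add, add_pow, add_pow, ← sum_add_distrib, mul_sum,
    sum_range_succ_eq_sum_two_mul]
  · refine sum_congr rfl fun k _ => ?_
    rw [(even_two_mul k).neg_pow, pow_mul]
    ring
  · intro m hm
    rw [hm.neg_pow]
    ring

theorem two_mul_sum_range_choose_two_mul {R : Type*} [CommRing R] {n : ℕ} (hn : n ≠ 0) :
    2 * ∑ k ∈ range (n / 2 + 1), (n.choose (2 * k) : R) = 2 ^ n := by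
  simpa [one_add_one_eq_two, zero_pow hn, eq_comm] using add_pow_add_sub_pow n (1 : R) 1

namespace Polynomial

theorem eq_C_coeff_mul_prod_X_sub_C_of_eval_eq_zero {R ι : Type*} [CommRing R] [IsDomain R]
    (s : Finset ι) {v : ι → R} (hv : Set.InjOn v s) {p : R[X]} (hp : p.natDegree ≤ #s)
    (hroot : ∀ i ∈ s, p.eval (v i) = 0) :
    p = C (p.coeff #s) * ∏ i ∈ s, (X - C (v i)) := by
  have hmonic : (∏ i ∈ s, (X - C (v i))).Monic :=
    monic_prod_of_monic _ _ fun i _ => monic_X_sub_C _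
  have hdeg : (∏ i ∈ s, (X - C (v i))).natDegree = #s := by
    rw [natDegree_prod_of_monic _ _ fun i _ => monic_X_sub_C _]
    simp
  refine eq_of_degree_sub_lt_of_eval_index_eq s hv ?_ fun i hi => ?_
  · rw [degree_lt_iff_coeff_zero]
    intro m hm
    rw [coeff_sub, coeff_C_mul]
    rcases hm.eq_or_lt with rfl | hlt
    · rw [← hdeg, hmonic.coeff_natDegree, hdeg, mul_one, sub_self]
    · rw [coeff_eq_zero_of_natDegree_lt (hp.trans_lt hlt),
        coeff_eq_zero_of_natDegree_lt (hdeg.trans_lt hlt), mul_zero, sub_zero]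
  · simp [hroot i hi, eval_prod, prod_eq_zero hi]

section EvenBinomialSum

variable {R : Type*} [CommRing R]

/-- By `add_pow_add_sub_pow`, `2 * evenBinomialSum n c` is
`(X + √(X² + c))ⁿ + (X - √(X² + c))ⁿ` wherever the square root makes sense. -/
noncomputable def evenBinomialSum (n : ℕ) (c : R) : R[X] :=
  ∑ k ∈ range (n / 2 + 1), (n.choose (2 * k) : R[X]) * X ^ (n - 2 * k) * (X ^ 2 + C c) ^ k

theorem eval_evenBinomialSum (n : ℕ) (c x : R) :
    (evenBinomialSum n c).eval x
      = ∑ k ∈ range (n / 2 + 1), (n.choose (2 * k) : R) * x ^ (n - 2 * k) * (x ^ 2 + c) ^ k := by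
  simp [evenBinomialSum, eval_finsetSum]

theorem natDegree_evenBinomialSum_le (n : ℕ) (c : R) : (evenBinomialSum n c).natDegree ≤ n := by
  refine natDegree_sum_le_of_forall_le _ _ fun k hk => ?_
  have h2k : 2 * k ≤ n := by simp only [mem_range] at hk; omega
  have hquad : (X ^ 2 + C c).natDegree ≤ 2 := by
    rw [natDegree_add_C]
    exact natDegree_X_pow_le 2
  refine (natDegree_mul_le_of_le (natDegree_mul_le_of_le (natDegree_natCast _).le
    (natDegree_X_pow_le _)) (natDegree_pow_le_of_le k hquad)).trans ?_
  omega

theorem coeff_evenBinomialSum_self [Nontrivial R] (n : ℕ) (c : R) :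
    (evenBinomialSum n c).coeff n = ∑ k ∈ range (n / 2 + 1), (n.choose (2 * k) : R) := by
  rw [evenBinomialSum, finsetSum_coeff]
  refine sum_congr rfl fun k hk => ?_
  have h2k : 2 * k ≤ n := by simp only [mem_range] at hk; omega
  have hmonic : ((X ^ 2 + C c) ^ k).Monic := (monic_X_pow_add_C c two_ne_zero).pow k
  have hdeg : ((X ^ 2 + C c) ^ k).natDegree = 2 * k := by
    rw [(monic_X_pow_add_C c two_ne_zero).natDegree_pow, natDegree_X_pow_add_C, mul_comm]
  rw [mul_assoc, coeff_natCast_mul, coeff_X_pow_mul', if_pos (Nat.sub_le _ _),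
    Nat.sub_sub_self h2k, ← hdeg, hmonic.coeff_natDegree, mul_one]

end EvenBinomialSum

open Complex in
theorem two_mul_eval_evenBinomialSum_neg_I_mul_cos (n : ℕ) (z φ : ℂ) :
    2 * (evenBinomialSum n (z ^ 2)).eval (-I * z * cos φ) = 2 * (-I * z) ^ n * cos (n * φ) := by
  have hsq : (-I * z * cos φ) ^ 2 + z ^ 2 = (z * sin φ) ^ 2 := by
    linear_combination (z ^ 2 * cos φ ^ 2) * I_sq - z ^ 2 * sin_sq_add_cos_sq φ
  have hplus : -I * z * cos φ + z * sin φ = -I * z * (cos φ + sin φ * I) := by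
    linear_combination (z * sin φ) * I_sq
  have hminus : -I * z * cos φ - z * sin φ = -I * z * (cos (-φ) + sin (-φ) * I) := by
    rw [cos_neg, sin_neg]
    linear_combination (-(z * sin φ)) * I_sq
  rw [eval_evenBinomialSum, hsq, ← add_pow_add_sub_pow, hplus, hminus]
  simp only [mul_pow, cos_add_sin_mul_I_pow]
  simp only [mul_neg, cos_neg, sin_neg]
  ring

end Polynomial

namespace Real

theorem injOn_cos_add_two_pi_mul_div {θ : ℝ} (hθ : sin θ ≠ 0) (n : ℕ) :
    Set.InjOn (fun l : ℕ => cos ((θ + 2 * π * l) / n)) (range n) := by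
  intro l hl m hm h
  simp only [coe_range, Set.mem_Iio] at hl hm
  have hn : (n : ℝ) ≠ 0 := Nat.cast_ne_zero.mpr (by omega)
  obtain ⟨k, hk | hk⟩ := cos_eq_cos_iff.mp h
  · have hkml : (2 * π) * m = (2 * π) * (k * n + l) := by
      field_simp at hk
      linear_combination hk
    have hmn : (m : ℤ) - l = k * n := by
      have := mul_left_cancel₀ two_pi_pos.ne' hkml
      push_cast [sub_eq_iff_eq_add]
      exact_mod_cast this
    have := Int.eq_zero_of_abs_lt_dvd (Dvd.intro_left k hmn.symm) (by rw [abs_lt]; omega)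
    omega
  · refine absurd ?_ hθ
    have : θ = ((k * n - m - l : ℤ) : ℝ) * π := by
      field_simp at hk
      push_cast
      linear_combination hk / 2
    rw [this, sin_int_mul_pi]

theorem cos_nat_mul_add_two_pi_mul_div {n : ℕ} (hn : n ≠ 0) (θ : ℝ) (l : ℕ) :
    cos (n * ((θ + 2 * π * l) / n)) = cos θ := by
  rw [mul_div_cancel₀ _ (Nat.cast_ne_zero.mpr hn), mul_comm _ (l : ℝ), cos_add_nat_mul_two_pi]

end Real

theorem Pn_factorization_general (n : ℕ) (hn : 0 < n) (z θ : ℝ) (hz : 0 < z)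
    (hθ : θ ∈ Set.Ioo 0 Real.pi) (s : ℂ) :
    2 * (∑ k ∈ Finset.range (n / 2 + 1),
        (n.choose (2 * k) : ℂ) * s ^ (n - 2 * k) * (s ^ 2 + (z : ℂ) ^ 2) ^ k)
      - 2 * (Real.cos θ : ℂ) * (-Complex.I * (z : ℂ)) ^ n
    = 2 ^ n * ∏ l ∈ Finset.range n,
        (s + Complex.I * (z : ℂ) * (Real.cos ((θ + 2 * Real.pi * l) / n) : ℝ)) := by
  set φ : ℕ → ℝ := fun l => (θ + 2 * Real.pi * l) / n
  set P : ℂ[X] := C 2 * evenBinomialSum n ((z : ℂ) ^ 2)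
    - C (2 * (Real.cos θ : ℂ) * (-Complex.I * z) ^ n)
  have hroot : ∀ l ∈ range n, P.eval (-Complex.I * z * Real.cos (φ l)) = 0 := by
    intro l _
    have hcos : Complex.cos (n * φ l) = Real.cos θ := by
      exact_mod_cast Real.cos_nat_mul_add_two_pi_mul_div hn.ne' θ l
    simp only [P, eval_sub, eval_mul, eval_C, Complex.ofReal_cos,
      two_mul_eval_evenBinomialSum_neg_I_mul_cos, hcos]
    ring
  have hinj : Set.InjOn (fun l => -Complex.I * z * Real.cos (φ l)) (range n) := by
    intro l hl m hm h
    have hIz : -Complex.I * z ≠ 0 := by simp [hz.ne']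
    exact Real.injOn_cos_add_two_pi_mul_div (Real.sin_pos_of_pos_of_lt_pi hθ.1 hθ.2).ne' n
      hl hm (by exact_mod_cast mul_left_cancel₀ hIz h)
  have hdeg : P.natDegree ≤ #(range n) := by
    rw [card_range, natDegree_sub_C]
    exact (natDegree_C_mul_le _ _).trans (natDegree_evenBinomialSum_le _ _)
  have hcoeff : P.coeff n = 2 ^ n := by
    rw [coeff_sub, coeff_C_mul, coeff_C, if_neg hn.ne', sub_zero, coeff_evenBinomialSum_self,
      two_mul_sum_range_choose_two_mul hn.ne']
  have hfactor := eq_C_coeff_mul_prod_X_sub_C_of_eval_eq_zero (range n) hinj hdeg hroot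
  rw [card_range, hcoeff] at hfactor
  simpa [P, φ, eval_evenBinomialSum, eval_prod] using congrArg (eval s) hfactor

/-- Factorization of `P_n(s) = 2 ∑_{k=0}^{⌊n/2⌋} C(n,2k) s^{n-2k} (s²+z²)^k - 2w(-iz)^n`
as `2^n ∏_{l=0}^{n-1} (s + iz cos((θ+2πl)/n))`. -/
theorem Pn_factorization (n : ℕ) (hodd : Odd n) (hn : 0 < n) (z θ : ℝ) (hz : 0 < z)
    (hθ : θ ∈ Set.Ioo 0 Real.pi) (s : ℂ) :
    2 * (∑ k ∈ Finset.range (n / 2 + 1),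
        (n.choose (2 * k) : ℂ) * s ^ (n - 2 * k) * (s ^ 2 + (z : ℂ) ^ 2) ^ k)
      - 2 * (Real.cos θ : ℂ) * (-Complex.I * (z : ℂ)) ^ n
    = 2 ^ n * ∏ l ∈ Finset.range n,
        (s + Complex.I * (z : ℂ) * (Real.cos ((θ + 2 * Real.pi * l) / n) : ℝ)) :=
  Pn_factorization_general n hn z θ hz hθ s
end

section
/- Let ñ be an odd positive integer and z > 0. The polynomial O_{ñ-1}(s) := -2 ∑_{k=0}^{⌊ñ/2⌋} C(ñ, 2k+1) s^{ñ-2k-1} (s^2+z^2)^k factors as O_{ñ-1}(s) = -2^ñ ∏_{l=1}^{ñ-1} (s - iz cos(lπ/ñ)). -/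
/-!
For `n = 2m + 1` and `b² = s² + z²` the binomial theorem gives
`2b · ∑ₖ C(n, 2k+1) s^(n-2k-1) (s² + z²)^k = (s + b)^n - (s - b)^n`.
At `s = iz cos θ` one may take `b = z sin θ`, so that `s ± b = iz (cos θ ∓ i sin θ)`; by de Moivre the two
`n`-th powers differ by `2 (iz)^n i sin (nθ)`, which vanishes for `θ = lπ/n`. For `0 < l < n` also
`b ≠ 0`, so these `n - 1` distinct points are roots of a polynomial of degree `n - 1` whose leading
coefficient is `∑ₖ C(n, 2k+1) = 2^(n-1)`.
-/

open Finset Polynomial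

theorem Finset.sum_range_two_mul_eq_sum_even_add_odd {M : Type*} [AddCommMonoid M] (f : ℕ → M)
    (n : ℕ) : ∑ j ∈ range (2 * n), f j = ∑ k ∈ range n, (f (2 * k) + f (2 * k + 1)) := by
  induction n with
  | zero => simp
  | succ n ih => rw [mul_add_one, sum_range_succ, sum_range_succ, sum_range_succ, ih, add_assoc]

theorem add_pow_sub_sub_pow_two_mul_add_one {R : Type*} [CommRing R] (a b : R) (m : ℕ) :
    (a + b) ^ (2 * m + 1) - (a - b) ^ (2 * m + 1) =
      2 * b * ∑ k ∈ range (m + 1),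
        ((2 * m + 1).choose (2 * k + 1) : R) * a ^ (2 * m - 2 * k) * (b ^ 2) ^ k := by
  rw [add_comm a b, show a - b = -b + a by ring, add_pow, add_pow, ← sum_sub_distrib,
    show 2 * m + 1 + 1 = 2 * (m + 1) by ring, sum_range_two_mul_eq_sum_even_add_odd, mul_sum]
  refine sum_congr rfl fun k _ => ?_
  rw [Even.neg_pow ⟨k, two_mul k⟩, Odd.neg_pow ⟨k, rfl⟩,
    show 2 * m + 1 - (2 * k + 1) = 2 * m - 2 * k by omega]
  ring

theorem Nat.sum_range_choose_two_mul_add_one (m : ℕ) :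
    ∑ k ∈ range (m + 1), (2 * m + 1).choose (2 * k + 1) = 2 ^ (2 * m) := by
  have h := add_pow_sub_sub_pow_two_mul_add_one (1 : ℤ) 1 m
  norm_num at h
  have h' : 2 ^ (2 * m + 1) = 2 * ∑ k ∈ range (m + 1), (2 * m + 1).choose (2 * k + 1) := by
    exact_mod_cast h
  rw [pow_succ'] at h'
  omega

theorem Polynomial.eq_C_coeff_mul_prod_X_sub_C_of_eval_eq_zero_s9 {R ι : Type*} [CommRing R]
    [IsDomain R] {v : ι → R} (s : Finset ι) (hvs : Set.InjOn v s) {p : R[X]}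
    (hdeg : p.natDegree ≤ #s) (hroot : ∀ i ∈ s, p.eval (v i) = 0) :
    p = C (p.coeff #s) * ∏ i ∈ s, (X - C (v i)) := by
  have hmonic : (∏ i ∈ s, (X - C (v i))).Monic := monic_prod_X_sub_C v s
  have hdegQ : (∏ i ∈ s, (X - C (v i))).natDegree = #s := natDegree_finsetProd_X_sub_C_eq_card s v
  refine eq_of_degree_sub_lt_of_eval_index_eq s hvs ?_ fun i hi => ?_
  · refine (degree_lt_iff_coeff_zero _ _).2 fun j hj => ?_
    rw [coeff_sub, coeff_C_mul]
    rcases hj.eq_or_lt with rfl | hlt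
    · rw [← hdegQ, hmonic.coeff_natDegree, mul_one, sub_self]
    · rw [coeff_eq_zero_of_natDegree_lt (hdeg.trans_lt hlt),
        coeff_eq_zero_of_natDegree_lt (hdegQ.trans_lt hlt), mul_zero, sub_zero]
  · rw [hroot i hi, eval_mul, eval_prod,
      prod_eq_zero hi (by rw [eval_sub, eval_X, eval_C, sub_self]), mul_zero]

section OddBinomialPoly

variable {R : Type*} [CommRing R]

/-- With `n = 2m + 1`, the paper's `O_{n-1}(s)` is `-2 * (oddBinomialPoly m (z ^ 2)).eval s`. -/
noncomputable def oddBinomialPoly (m : ℕ) (c : R) : R[X] :=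
  ∑ k ∈ range (m + 1),
    C ((2 * m + 1).choose (2 * k + 1) : R) * (X ^ (2 * m - 2 * k) * (X ^ 2 + C c) ^ k)

theorem eval_oddBinomialPoly (m : ℕ) (c x : R) :
    (oddBinomialPoly m c).eval x =
      ∑ k ∈ range (m + 1),
        ((2 * m + 1).choose (2 * k + 1) : R) * x ^ (2 * m - 2 * k) * (x ^ 2 + c) ^ k := by
  simp only [oddBinomialPoly, eval_finsetSum, eval_mul, eval_C, eval_pow, eval_add, eval_X,
    mul_assoc]

theorem two_mul_mul_eval_oddBinomialPoly (m : ℕ) (a b : R) :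
    2 * b * (oddBinomialPoly m (b ^ 2 - a ^ 2)).eval a =
      (a + b) ^ (2 * m + 1) - (a - b) ^ (2 * m + 1) := by
  rw [add_pow_sub_sub_pow_two_mul_add_one, eval_oddBinomialPoly, add_sub_cancel]

theorem monic_X_pow_mul_X_sq_add_C_pow (i k : ℕ) (c : R) : (X ^ i * (X ^ 2 + C c) ^ k).Monic :=
  (monic_X_pow i).mul ((monic_X_pow_add_C c two_ne_zero).pow k)

variable [Nontrivial R]

theorem natDegree_X_pow_mul_X_sq_add_C_pow (i k : ℕ) (c : R) :
    (X ^ i * (X ^ 2 + C c) ^ k).natDegree = i + 2 * k := by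
  rw [(monic_X_pow i).natDegree_mul ((monic_X_pow_add_C c two_ne_zero).pow k), natDegree_X_pow,
    (monic_X_pow_add_C c two_ne_zero).natDegree_pow, natDegree_X_pow_add_C, mul_comm]

theorem natDegree_oddBinomialPoly_le (m : ℕ) (c : R) :
    (oddBinomialPoly m c).natDegree ≤ 2 * m := by
  refine natDegree_sum_le_of_forall_le _ _ fun k hk => (natDegree_C_mul_le _ _).trans ?_
  rw [natDegree_X_pow_mul_X_sq_add_C_pow]
  have := mem_range.1 hk
  omega

theorem coeff_oddBinomialPoly_two_mul (m : ℕ) (c : R) :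
    (oddBinomialPoly m c).coeff (2 * m) = 2 ^ (2 * m) := by
  have hterm : ∀ k ∈ range (m + 1),
      (C ((2 * m + 1).choose (2 * k + 1) : R) *
        (X ^ (2 * m - 2 * k) * (X ^ 2 + C c) ^ k)).coeff (2 * m) =
      ((2 * m + 1).choose (2 * k + 1) : R) := by
    intro k hk
    have hlead := (monic_X_pow_mul_X_sq_add_C_pow (2 * m - 2 * k) k c).coeff_natDegree
    rw [natDegree_X_pow_mul_X_sq_add_C_pow,
      show 2 * m - 2 * k + 2 * k = 2 * m by have := mem_range.1 hk; omega] at hlead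
    rw [coeff_C_mul, hlead, mul_one]
  rw [oddBinomialPoly, finsetSum_coeff, sum_congr rfl hterm, ← Nat.cast_sum,
    Nat.sum_range_choose_two_mul_add_one, Nat.cast_pow, Nat.cast_ofNat]

end OddBinomialPoly

open Complex in
theorem eval_oddBinomialPoly_I_mul_cos {m : ℕ} {z θ : ℝ} (hz : z ≠ 0) (hθ : Real.sin θ ≠ 0)
    (hmθ : Real.sin ((2 * m + 1 : ℕ) * θ) = 0) :
    (oddBinomialPoly m ((z : ℂ) ^ 2)).eval (I * z * (Real.cos θ : ℂ)) = 0 := by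
  set r : ℂ := I * z * (Real.cos θ : ℂ)
  set b : ℂ := z * (Real.sin θ : ℂ)
  have hc : (z : ℂ) ^ 2 = b ^ 2 - r ^ 2 := by
    simp only [r, b, ofReal_cos, ofReal_sin]
    linear_combination -(z : ℂ) ^ 2 * sin_sq_add_cos_sq (θ : ℂ) + (z : ℂ) ^ 2 * cos (θ : ℂ) ^ 2 * I_sq
  have hplus : r + b = I * z * (cos (-θ : ℂ) + sin (-θ : ℂ) * I) := by
    simp only [r, b, ofReal_cos, ofReal_sin, cos_neg, sin_neg]
    linear_combination (z : ℂ) * sin (θ : ℂ) * I_sq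
  have hminus : r - b = I * z * (cos (θ : ℂ) + sin (θ : ℂ) * I) := by
    simp only [r, b, ofReal_cos, ofReal_sin]
    linear_combination -(z : ℂ) * sin (θ : ℂ) * I_sq
  have hsin : sin (((2 * m + 1 : ℕ) : ℂ) * θ) = 0 := by exact_mod_cast congrArg ofReal hmθ
  have hdiff : (r + b) ^ (2 * m + 1) - (r - b) ^ (2 * m + 1) = 0 := by
    rw [hplus, hminus, mul_pow, cos_add_sin_mul_I_pow, mul_pow _ (cos _ + _),
      cos_add_sin_mul_I_pow, mul_neg, cos_neg, sin_neg, hsin]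
    ring
  have hb : 2 * b ≠ 0 :=
    mul_ne_zero two_ne_zero (mul_ne_zero (ofReal_ne_zero.2 hz) (ofReal_ne_zero.2 hθ))
  rw [hc]
  exact (mul_eq_zero.1 ((two_mul_mul_eval_oddBinomialPoly m r b).trans hdiff)).resolve_left hb

theorem eval_oddBinomialPoly_I_mul_cos_nat_mul_pi_div {m l : ℕ} {z : ℝ} (hz : z ≠ 0) (hl₀ : 0 < l)
    (hl : l < 2 * m + 1) :
    (oddBinomialPoly m ((z : ℂ) ^ 2)).eval
      (Complex.I * z * (Real.cos (l * Real.pi / (2 * m + 1 : ℕ)) : ℂ)) = 0 := by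
  have hn : (0 : ℝ) < (2 * m + 1 : ℕ) := by positivity
  refine eval_oddBinomialPoly_I_mul_cos hz (Real.sin_pos_of_pos_of_lt_pi (by positivity) ?_).ne' ?_
  · rw [div_lt_iff₀ hn, mul_comm]
    exact mul_lt_mul_of_pos_left (by exact_mod_cast hl) Real.pi_pos
  · rw [mul_div_cancel₀ _ hn.ne']
    exact Real.sin_nat_mul_pi l

theorem injOn_I_mul_cos_nat_mul_pi_div {z : ℝ} (hz : z ≠ 0) (n : ℕ) :
    Set.InjOn (fun l : ℕ => Complex.I * z * (Real.cos (l * Real.pi / n) : ℂ)) (Set.Iic n) := by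
  intro l₁ hl₁ l₂ hl₂ h
  have hIz : Complex.I * z ≠ 0 := mul_ne_zero Complex.I_ne_zero (Complex.ofReal_ne_zero.2 hz)
  have hmem : ∀ l ∈ Set.Iic n, (l : ℝ) * Real.pi / n ∈ Set.Icc 0 Real.pi := fun l hl => by
    refine ⟨by positivity, div_le_of_le_mul₀ (Nat.cast_nonneg _) Real.pi_pos.le ?_⟩
    rw [mul_comm]
    exact mul_le_mul_of_nonneg_left (Nat.cast_le.2 hl) Real.pi_pos.le
  have h := Real.injOn_cos (hmem l₁ hl₁) (hmem l₂ hl₂)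
    (Complex.ofReal_injective (mul_left_cancel₀ hIz h))
  obtain rfl | hn := n.eq_zero_or_pos
  · exact (Nat.le_zero.1 hl₁).trans (Nat.le_zero.1 hl₂).symm
  · rw [div_left_inj' (by positivity), mul_left_inj' Real.pi_ne_zero] at h
    exact_mod_cast h

theorem On_factorization_general (nt : ℕ) (hodd : Odd nt) (z : ℝ) (hz : 0 < z) (s : ℂ) :
    -2 * ∑ k ∈ Finset.range (nt / 2 + 1),
        (nt.choose (2 * k + 1) : ℂ) * s ^ (nt - 2 * k - 1) * (s ^ 2 + (z : ℂ) ^ 2) ^ k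
    = -(2 : ℂ) ^ nt * ∏ l ∈ Finset.Icc 1 (nt - 1),
        (s - Complex.I * (z : ℂ) * (Real.cos (l * Real.pi / nt) : ℝ)) := by
  obtain ⟨m, rfl⟩ := hodd
  have hfac := eq_C_coeff_mul_prod_X_sub_C_of_eval_eq_zero_s9 (Icc 1 (2 * m))
    ((injOn_I_mul_cos_nat_mul_pi_div hz.ne' (2 * m + 1)).mono fun l hl =>
      Set.mem_Iic.2 ((mem_Icc.1 hl).2.trans (Nat.le_succ _)))
    (by simpa using natDegree_oddBinomialPoly_le m ((z : ℂ) ^ 2))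
    fun l hl => eval_oddBinomialPoly_I_mul_cos_nat_mul_pi_div hz.ne' (mem_Icc.1 hl).1
      (Nat.lt_succ_of_le (mem_Icc.1 hl).2)
  rw [Nat.card_Icc, add_tsub_cancel_right, coeff_oddBinomialPoly_two_mul] at hfac
  have hs := congrArg (eval s) hfac
  simp only [eval_oddBinomialPoly, eval_mul, eval_C, eval_prod, eval_sub, eval_X] at hs
  rw [show (2 * m + 1) / 2 = m by omega, add_tsub_cancel_right]
  simp only [show ∀ k, 2 * m + 1 - 2 * k - 1 = 2 * m - 2 * k from fun k => by omega]
  rw [hs, pow_succ]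
  ring

/-- For `nt` odd, `O_{nt-1}(s) = -2 ∑_{k} C(nt,2k+1) s^{nt-2k-1}(s²+z²)^k` factors as
`-2^nt ∏_{l=1}^{nt-1} (s - iz cos(lπ/nt))`. -/
theorem On_factorization (nt : ℕ) (hodd : Odd nt) (hn : 0 < nt) (z : ℝ) (hz : 0 < z) (s : ℂ) :
    -2 * ∑ k ∈ Finset.range (nt / 2 + 1),
        (nt.choose (2 * k + 1) : ℂ) * s ^ (nt - 2 * k - 1) * (s ^ 2 + (z : ℂ) ^ 2) ^ k
    = -(2 : ℂ) ^ nt * ∏ l ∈ Finset.Icc 1 (nt - 1),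
        (s - Complex.I * (z : ℂ) * (Real.cos (l * Real.pi / nt) : ℝ)) :=
  On_factorization_general nt hodd z hz s
end

section
/- For real numbers α, β > 0 and complex b with |b| < 1, and real s > 1, the Laplace transform of t ↦ t^{β-1} E_{α,β}(b t^α) equals s^{-β}/(1 - b s^{-α}), where E_{α,β}(z) = ∑_{n=0}^∞ z^n / Γ(αn + β) is the two-parameter Mittag-Leffler function. -/
/-!
Expanding `E_{α,β}`, the integrand is the generalized power series
`∑ bⁿ/Γ(αn+β) · t^{αn+β-1} e^{-st}`. Each term has Laplace transform `bⁿ s^{-(αn+β)}` by Euler's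
integral for `Γ`, and these are summable in norm because `‖b‖ s^{-α} < 1`, so the integral and
the sum may be exchanged; what remains is the geometric series `s^{-β} ∑ (b s^{-α})ⁿ`.
-/

open MeasureTheory Set Real

/-- The two-parameter Mittag-Leffler function `E_{α,β}(z) = ∑ zⁿ/Γ(αn+β)`. -/
noncomputable def mittagLeffler (α β : ℝ) (z : ℂ) : ℂ :=
  ∑' n : ℕ, z ^ n / Complex.Gamma ((α * n + β : ℝ) : ℂ)

lemma integral_rpow_sub_one_mul_exp_neg_mul_Ioi {a r : ℝ} (ha : 0 < a) (hr : 0 < r) :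
    ∫ t in Ioi (0 : ℝ), t ^ (a - 1) * rexp (-(r * t)) = Gamma a * r ^ (-a) := by
  rw [Real.integral_rpow_mul_exp_neg_mul_Ioi ha hr, one_div, inv_rpow hr.le, ← rpow_neg hr.le,
    mul_comm]

lemma integrableOn_rpow_sub_one_mul_exp_neg_mul_Ioi {a r : ℝ} (ha : 0 < a) (hr : 0 < r) :
    IntegrableOn (fun t : ℝ ↦ t ^ (a - 1) * rexp (-(r * t))) (Ioi 0) :=
  Integrable.of_integral_ne_zero <| by
    rw [integral_rpow_sub_one_mul_exp_neg_mul_Ioi ha hr]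
    exact (mul_pos (Gamma_pos_of_pos ha) (rpow_pos_of_pos hr _)).ne'

theorem hasSum_integral_tsum_rpow_mul_exp_neg_mul {ι : Type*} [Countable ι] {c : ι → ℂ}
    {p : ι → ℝ} {r : ℝ} (hp : ∀ i, 0 < p i) (hr : 0 < r)
    (hsum : Summable fun i ↦ ‖c i * ((Gamma (p i) * r ^ (-p i) : ℝ) : ℂ)‖) :
    HasSum (fun i ↦ c i * ((Gamma (p i) * r ^ (-p i) : ℝ) : ℂ))
      (∫ t in Ioi (0 : ℝ), ∑' i, c i * ((t ^ (p i - 1) * rexp (-(r * t)) : ℝ) : ℂ)) := by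
  have h_integral (i : ι) : ∫ t in Ioi (0 : ℝ), c i * ((t ^ (p i - 1) * rexp (-(r * t)) : ℝ) : ℂ)
      = c i * ((Gamma (p i) * r ^ (-p i) : ℝ) : ℂ) := by
    rw [integral_const_mul, integral_complex_ofReal,
      integral_rpow_sub_one_mul_exp_neg_mul_Ioi (hp i) hr]
  have h_integral_norm (i : ι) :
      ∫ t in Ioi (0 : ℝ), ‖c i * ((t ^ (p i - 1) * rexp (-(r * t)) : ℝ) : ℂ)‖
        = ‖c i * ((Gamma (p i) * r ^ (-p i) : ℝ) : ℂ)‖ := by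
    have h_nonneg : ∀ t ∈ Ioi (0 : ℝ), 0 ≤ t ^ (p i - 1) * rexp (-(r * t)) :=
      fun t ht ↦ by have : (0 : ℝ) < t := ht; positivity
    rw [setIntegral_congr_fun measurableSet_Ioi fun t ht ↦ by
        rw [norm_mul, Complex.norm_real, norm_of_nonneg (h_nonneg t ht)],
      integral_const_mul, integral_rpow_sub_one_mul_exp_neg_mul_Ioi (hp i) hr, norm_mul,
      Complex.norm_real, norm_of_nonneg (by have := Gamma_pos_of_pos (hp i); positivity)]
  simp_rw [← h_integral]
  refine hasSum_integral_of_summable_integral_norm (fun i ↦ ?_)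
    (by simpa only [h_integral_norm] using hsum)
  exact ((integrableOn_rpow_sub_one_mul_exp_neg_mul_Ioi (hp i) hr).ofReal).const_mul (c i)

lemma exp_mul_rpow_mul_mittagLeffler_eq_tsum (α β : ℝ) (b : ℂ) (s : ℝ) {t : ℝ} (ht : 0 < t) :
    Complex.exp (-(s : ℂ) * t) * ((t ^ (β - 1) : ℝ) : ℂ) *
        mittagLeffler α β (b * ((t ^ α : ℝ) : ℂ))
      = ∑' n : ℕ, b ^ n / Complex.Gamma ((α * n + β : ℝ) : ℂ) *
          ((t ^ (α * n + β - 1) * rexp (-(s * t)) : ℝ) : ℂ) := by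
  rw [mittagLeffler, ← tsum_mul_left]
  refine tsum_congr fun n ↦ ?_
  have h_pow : t ^ (α * n + β - 1) = t ^ (β - 1) * (t ^ α) ^ n := by
    rw [← rpow_natCast, ← rpow_mul ht.le, ← rpow_add ht]
    ring_nf
  rw [h_pow]
  push_cast
  rw [neg_mul]
  ring

lemma mittagLeffler_coeff_mul_Gamma_mul_rpow {α β s : ℝ} (b : ℂ) (hs : 0 < s) {n : ℕ}
    (hn : 0 < α * n + β) :
    b ^ n / Complex.Gamma ((α * n + β : ℝ) : ℂ) *
        ((Gamma (α * n + β) * s ^ (-(α * n + β)) : ℝ) : ℂ)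
      = (b * ((s ^ (-α) : ℝ) : ℂ)) ^ n * ((s ^ (-β) : ℝ) : ℂ) := by
  have h_Gamma : (Gamma (α * n + β) : ℂ) ≠ 0 :=
    Complex.ofReal_ne_zero.mpr (Gamma_pos_of_pos hn).ne'
  have h_pow : s ^ (-(α * n + β)) = (s ^ (-α)) ^ n * s ^ (-β) := by
    rw [← rpow_natCast, ← rpow_mul hs.le, ← rpow_add hs]
    ring_nf
  rw [Complex.Gamma_ofReal, h_pow]
  push_cast
  rw [mul_pow, ← mul_assoc, div_mul_cancel₀ _ h_Gamma, mul_assoc]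

/-- For `α, β > 0`, `|b| < 1`, and real `s > 1`, the Laplace transform of
`t ↦ t^{β-1} E_{α,β}(b t^α)` equals `s^{-β}/(1 - b s^{-α})`. -/
theorem laplace_mittagLeffler (α β : ℝ) (hα : 0 < α) (hβ : 0 < β) (b : ℂ)
    (hb : ‖b‖ < 1) (s : ℝ) (hs : 1 < s) :
    ∫ t in Set.Ioi (0 : ℝ),
        Complex.exp (-(s : ℂ) * t) * ((t ^ (β - 1) : ℝ) : ℂ) *
          mittagLeffler α β (b * ((t ^ α : ℝ) : ℂ))
      = (s : ℂ) ^ (-(β : ℂ)) / (1 - b * (s : ℂ) ^ (-(α : ℂ))) := by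
  have hs₀ : 0 < s := one_pos.trans hs
  have hp (n : ℕ) : 0 < α * n + β := by positivity
  set x : ℂ := b * ((s ^ (-α) : ℝ) : ℂ)
  have hx : ‖x‖ < 1 := by
    rw [norm_mul, Complex.norm_real, norm_of_nonneg (rpow_nonneg hs₀.le _)]
    exact (mul_le_of_le_one_right (norm_nonneg b)
      (rpow_le_one_of_one_le_of_nonpos hs.le (neg_nonpos.mpr hα.le))).trans_lt hb
  have h_geom :
      HasSum (fun n ↦ x ^ n * ((s ^ (-β) : ℝ) : ℂ)) ((1 - x)⁻¹ * ((s ^ (-β) : ℝ) : ℂ)) :=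
    (hasSum_geometric_of_norm_lt_one hx).mul_right _
  have h_norm_summable : Summable fun n ↦ ‖x ^ n * ((s ^ (-β) : ℝ) : ℂ)‖ := by
    simpa only [norm_mul, norm_pow] using
      (summable_geometric_of_lt_one (norm_nonneg x) hx).mul_right ‖((s ^ (-β) : ℝ) : ℂ)‖
  have h_laplace := hasSum_integral_tsum_rpow_mul_exp_neg_mul
    (c := fun n : ℕ ↦ b ^ n / Complex.Gamma ((α * n + β : ℝ) : ℂ)) hp hs₀
    (by simpa only [mittagLeffler_coeff_mul_Gamma_mul_rpow b hs₀ (hp _)] using h_norm_summable)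
  simp only [mittagLeffler_coeff_mul_Gamma_mul_rpow b hs₀ (hp _)] at h_laplace
  rw [setIntegral_congr_fun measurableSet_Ioi
      fun t ht ↦ exp_mul_rpow_mul_mittagLeffler_eq_tsum α β b s ht,
    h_laplace.unique h_geom]
  simp only [x, Complex.ofReal_cpow hs₀.le, Complex.ofReal_neg]
  rw [inv_mul_eq_div]
end

section
/- For real α, β > 0, δ ∈ ℂ, complex b, and real s with s > max(|b|^{1/α}, 0), the Laplace transform of t ↦ t^{β-1} E^δ_{α,β}(b t^α) equals s^{-β} (1 - b s^{-α})^{-δ}, where E^δ_{α,β}(z) = ∑_{n=0}^∞ (δ)_n z^n / (Γ(αn+β) n!) is the Prabhakar generalized Mittag-Leffler function and (δ)_n is the rising Pochhammer symbol. -/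
/-!
Expand `E^δ_{α,β}(b t^α)` as a power series in `t^α` and integrate term by term:
`∫₀^∞ e^{-st} t^{αn+β-1} dt = Γ(αn+β) s^{-(αn+β)}`, so the Gamma factors cancel and what remains
is `s^{-β}` times the binomial series `∑ (δ)ₙ xⁿ / n! = (1 - x)^{-δ}` at `x = b s^{-α}`, which
converges absolutely because `|x| < 1`. That absolute convergence is exactly what justifies
exchanging sum and integral.
-/

open Finset MeasureTheory Set

/-- The Prabhakar generalized Mittag-Leffler function
`E^δ_{α,β}(z) = ∑ (δ)ₙ zⁿ/(Γ(αn+β) n!)`. -/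
noncomputable def prabhakar (α β : ℝ) (δ : ℂ) (z : ℂ) : ℂ :=
  ∑' n : ℕ, (∏ j ∈ Finset.range n, (δ + j)) * z ^ n /
    (Complex.Gamma ((α * n + β : ℝ) : ℂ) * (n.factorial : ℂ))

theorem ascPochhammer_eval_eq_prod_range {R : Type*} [CommSemiring R] (r : R) (n : ℕ) :
    (ascPochhammer R n).eval r = ∏ j ∈ range n, (r + j) := by
  induction n with
  | zero => simp
  | succ n ih => rw [ascPochhammer_succ_eval, ih, prod_range_succ]

theorem Ring.choose_add_sub_one_eq_prod_div_factorial {K : Type*} [Field K] [CharZero K]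
    (r : K) (n : ℕ) : Ring.choose (r + n - 1) n = (∏ j ∈ range n, (r + j)) / n.factorial := by
  rw [← Ring.multichoose_eq, eq_div_iff (by exact_mod_cast n.factorial_ne_zero), mul_comm,
    ← nsmul_eq_mul, Ring.factorial_nsmul_multichoose_eq_ascPochhammer,
    Polynomial.ascPochhammer_smeval_eq_eval, ascPochhammer_eval_eq_prod_range]

theorem Complex.hasFPowerSeriesOnBall_one_sub_cpow_neg (δ : ℂ) :
    HasFPowerSeriesOnBall (fun z ↦ (1 - z) ^ (-δ))
      (.ofScalars ℂ fun n ↦ (∏ j ∈ range n, (δ + j)) / n.factorial) 0 1 := by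
  have := one_div_one_sub_cpow_hasFPowerSeriesOnBall_zero δ
  simp only [Ring.choose_add_sub_one_eq_prod_div_factorial, one_div, ← cpow_neg] at this
  exact this

theorem mem_eball_zero_one_of_norm_lt_one {E : Type*} [SeminormedAddCommGroup E] {z : E}
    (hz : ‖z‖ < 1) : z ∈ Metric.eball (0 : E) 1 := by
  rw [mem_eball_zero_iff, ← ofReal_norm]
  exact ENNReal.ofReal_lt_one.2 hz

theorem Complex.hasSum_prod_add_div_factorial_mul_pow (δ : ℂ) {z : ℂ} (hz : ‖z‖ < 1) :
    HasSum (fun n ↦ (∏ j ∈ range n, (δ + j)) / n.factorial * z ^ n) ((1 - z) ^ (-δ)) := by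
  simpa [FormalMultilinearSeries.ofScalars_apply_eq, mul_comm] using
    (hasFPowerSeriesOnBall_one_sub_cpow_neg δ).hasSum (mem_eball_zero_one_of_norm_lt_one hz)

theorem Complex.summable_norm_prod_add_div_factorial_mul_pow (δ : ℂ) {z : ℂ} (hz : ‖z‖ < 1) :
    Summable (fun n ↦ ‖(∏ j ∈ range n, (δ + j)) / n.factorial * z ^ n‖) := by
  simpa [FormalMultilinearSeries.ofScalars_apply_eq, mul_comm] using
    FormalMultilinearSeries.summable_norm_apply _ (Metric.eball_subset_eball
      (hasFPowerSeriesOnBall_one_sub_cpow_neg δ).r_le (mem_eball_zero_one_of_norm_lt_one hz))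

theorem Real.integrableOn_rpow_mul_exp_neg_mul {γ s : ℝ} (hγ : 0 < γ) (hs : 0 < s) :
    IntegrableOn (fun t ↦ t ^ (γ - 1) * exp (-(s * t))) (Ioi 0) := by
  simpa using integrableOn_rpow_mul_exp_neg_mul_rpow (p := 1) (by linarith) one_pos hs

theorem Complex.exp_neg_mul_mul_rpow_mul_pow {α β s t : ℝ} (ht : 0 < t) (n : ℕ) :
    Complex.exp (-(s : ℂ) * t) * ((t ^ (β - 1) : ℝ) : ℂ) * ((t ^ α : ℝ) : ℂ) ^ n
      = ((t ^ (α * n + β - 1) * Real.exp (-(s * t)) : ℝ) : ℂ) := by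
  rw [show α * n + β - 1 = α * n + (β - 1) by ring, Real.rpow_add ht, Real.rpow_mul ht.le,
    Real.rpow_natCast]
  push_cast
  ring_nf

theorem integral_cexp_neg_mul_mul_rpow_mul_tsum {α β s : ℝ} (hα : 0 ≤ α) (hβ : 0 < β)
    (hs : 0 < s) {c : ℕ → ℂ}
    (hc : Summable fun n : ℕ ↦
      ‖c n * (((1 / s) ^ (α * n + β) * Real.Gamma (α * n + β) : ℝ) : ℂ)‖) :
    ∫ t in Ioi (0 : ℝ), Complex.exp (-(s : ℂ) * t) * ((t ^ (β - 1) : ℝ) : ℂ) *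
        ∑' n, c n * ((t ^ α : ℝ) : ℂ) ^ n
      = ∑' n : ℕ, c n * (((1 / s) ^ (α * n + β) * Real.Gamma (α * n + β) : ℝ) : ℂ) := by
  set g : ℕ → ℝ → ℝ := fun n t ↦ t ^ (α * n + β - 1) * Real.exp (-(s * t))
  have hexp : ∀ n : ℕ, 0 < α * n + β := fun n ↦ by positivity
  have hg_int : ∀ n, IntegrableOn (g n) (Ioi 0) := fun n ↦
    Real.integrableOn_rpow_mul_exp_neg_mul (hexp n) hs
  have hg_val : ∀ n, ∫ t in Ioi 0, g n t = (1 / s) ^ (α * n + β) * Real.Gamma (α * n + β) :=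
    fun n ↦ Real.integral_rpow_mul_exp_neg_mul_Ioi (hexp n) hs
  have hg_nonneg : ∀ n, ∀ t ∈ Ioi (0 : ℝ), 0 ≤ g n t := fun n t ht ↦
    mul_nonneg (Real.rpow_nonneg (le_of_lt ht) _) (Real.exp_pos _).le
  have hseries : ∀ t ∈ Ioi (0 : ℝ), Complex.exp (-(s : ℂ) * t) * ((t ^ (β - 1) : ℝ) : ℂ) *
      ∑' n, c n * ((t ^ α : ℝ) : ℂ) ^ n = ∑' n, c n * (g n t : ℂ) := by
    intro t ht
    rw [← tsum_mul_left]
    refine tsum_congr fun n ↦ ?_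
    rw [← Complex.exp_neg_mul_mul_rpow_mul_pow ht]
    ring
  have hnorm : ∀ n, ∫ t in Ioi 0, ‖c n * (g n t : ℂ)‖
      = ‖c n * ((∫ t in Ioi 0, g n t : ℝ) : ℂ)‖ := by
    intro n
    rw [norm_mul, Complex.norm_real,
      Real.norm_of_nonneg (setIntegral_nonneg measurableSet_Ioi (hg_nonneg n)),
      ← integral_const_mul]
    refine setIntegral_congr_fun measurableSet_Ioi fun t ht ↦ ?_
    rw [norm_mul, Complex.norm_real, Real.norm_of_nonneg (hg_nonneg n t ht)]
  rw [setIntegral_congr_fun measurableSet_Ioi hseries,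
    ← integral_tsum_of_summable_integral_norm (F := fun n t ↦ c n * (g n t : ℂ))
      (fun n ↦ ((hg_int n).ofReal (𝕜 := ℂ)).const_mul (c n))
      (by simpa only [hnorm, hg_val] using hc)]
  refine tsum_congr fun n ↦ ?_
  rw [integral_const_mul, integral_complex_ofReal, hg_val]

noncomputable def prabhakarCoeff (α β : ℝ) (δ : ℂ) (n : ℕ) : ℂ :=
  (∏ j ∈ range n, (δ + j)) / (Complex.Gamma ((α * n + β : ℝ) : ℂ) * n.factorial)

theorem prabhakar_mul_eq_tsum (α β : ℝ) (δ b y : ℂ) :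
    prabhakar α β δ (b * y) = ∑' n, prabhakarCoeff α β δ n * b ^ n * y ^ n := by
  refine tsum_congr fun n ↦ ?_
  rw [prabhakarCoeff, mul_pow]
  ring

theorem prabhakarCoeff_mul_pow_mul_laplace {α β s : ℝ} (hs : 0 < s) (δ b : ℂ) {n : ℕ}
    (hγ : 0 < α * n + β) :
    prabhakarCoeff α β δ n * b ^ n * (((1 / s) ^ (α * n + β) * Real.Gamma (α * n + β) : ℝ) : ℂ)
      = (((1 / s) ^ β : ℝ) : ℂ) *
          ((∏ j ∈ range n, (δ + j)) / n.factorial * (b * (((1 / s) ^ α : ℝ) : ℂ)) ^ n) := by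
  have hΓ : (Real.Gamma (α * n + β) : ℂ) ≠ 0 :=
    Complex.ofReal_ne_zero.2 (Real.Gamma_pos_of_pos hγ).ne'
  rw [prabhakarCoeff, Complex.Gamma_ofReal, Real.rpow_add (by positivity),
    Real.rpow_mul (by positivity), Real.rpow_natCast]
  push_cast
  field_simp
  ring

theorem Complex.ofReal_one_div_rpow {s : ℝ} (hs : 0 ≤ s) (γ : ℝ) :
    (((1 / s) ^ γ : ℝ) : ℂ) = (s : ℂ) ^ (-(γ : ℂ)) := by
  rw [one_div, Real.inv_rpow hs, ← Real.rpow_neg hs, Complex.ofReal_cpow hs, Complex.ofReal_neg]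

theorem norm_mul_one_div_rpow_lt_one {α s : ℝ} (hα : 0 < α) (hs : 0 < s) {b : ℂ}
    (hb : ‖b‖ ^ (1 / α) < s) : ‖b * (((1 / s) ^ α : ℝ) : ℂ)‖ < 1 := by
  rw [one_div α, Real.rpow_inv_lt_iff_of_pos (norm_nonneg b) hs.le hα] at hb
  rw [norm_mul, Complex.norm_real, Real.norm_of_nonneg (by positivity),
    Real.div_rpow zero_le_one hs.le, Real.one_rpow, mul_one_div, div_lt_one (by positivity)]
  exact hb

/-- For `α, β > 0`, `δ ∈ ℂ`, `b ∈ ℂ` and real `s > max(|b|^{1/α}, 0)`, the Laplace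
transform of `t ↦ t^{β-1} E^δ_{α,β}(b t^α)` equals `s^{-β} (1 - b s^{-α})^{-δ}`. -/
theorem laplace_prabhakar (α β : ℝ) (hα : 0 < α) (hβ : 0 < β) (δ b : ℂ) (s : ℝ)
    (hs : max (‖b‖ ^ (1 / α)) 0 < s) :
    ∫ t in Set.Ioi (0 : ℝ),
        Complex.exp (-(s : ℂ) * t) * ((t ^ (β - 1) : ℝ) : ℂ) *
          prabhakar α β δ (b * ((t ^ α : ℝ) : ℂ))
      = (s : ℂ) ^ (-(β : ℂ)) * (1 - b * (s : ℂ) ^ (-(α : ℂ))) ^ (-δ) := by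
  obtain ⟨hb, hs₀⟩ := max_lt_iff.1 hs
  have hx := norm_mul_one_div_rpow_lt_one hα hs₀ hb
  have hcoeff (n : ℕ) :=
    prabhakarCoeff_mul_pow_mul_laplace (α := α) (β := β) hs₀ δ b (n := n) (by positivity)
  calc _ = ∫ t in Ioi (0 : ℝ), Complex.exp (-(s : ℂ) * t) * ((t ^ (β - 1) : ℝ) : ℂ) *
          ∑' n, prabhakarCoeff α β δ n * b ^ n * ((t ^ α : ℝ) : ℂ) ^ n := by
        simp_rw [prabhakar_mul_eq_tsum]
    _ = ∑' n : ℕ, prabhakarCoeff α β δ n * b ^ n *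
          (((1 / s) ^ (α * n + β) * Real.Gamma (α * n + β) : ℝ) : ℂ) := by
        refine integral_cexp_neg_mul_mul_rpow_mul_tsum hα.le hβ hs₀ ?_
        simp_rw [hcoeff, norm_mul (((1 / s) ^ β : ℝ) : ℂ)]
        exact (Complex.summable_norm_prod_add_div_factorial_mul_pow δ hx).mul_left _
    _ = ∑' n : ℕ, (((1 / s) ^ β : ℝ) : ℂ) *
          ((∏ j ∈ range n, (δ + j)) / n.factorial * (b * (((1 / s) ^ α : ℝ) : ℂ)) ^ n) :=
        tsum_congr hcoeff
    _ = _ := by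
        rw [tsum_mul_left, (Complex.hasSum_prod_add_div_factorial_mul_pow δ hx).tsum_eq,
          Complex.ofReal_one_div_rpow hs₀.le, Complex.ofReal_one_div_rpow hs₀.le]
end

section
/- For complex z with |z| < 1, real ξ with |ξ| < 1, and real λ > 0, the generating series identity (1 - z²)/(1 - 2ξz + z²)^{λ+1} = ∑_{j=0}^∞ ((j+λ)/λ) C_j^λ(ξ) z^j holds, where C_j^λ are the Gegenbauer polynomials. -/
/-- The Gegenbauer polynomial `C_n^λ(w)`. -/
noncomputable def gegenbauerC (lam : ℝ) (n : ℕ) (w : ℝ) : ℝ :=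
  ∑ j ∈ Finset.range (n / 2 + 1),
    (-1 : ℝ) ^ j * Real.Gamma ((n : ℝ) - j + lam) /
      (Real.Gamma lam * (j.factorial : ℝ) * ((n - 2 * j).factorial : ℝ)) *
        (2 * w) ^ (n - 2 * j)

/-!
Expanding `(1 - u)^{-λ}` by the binomial series at `u = z(2ξ - z)` and regrouping by powers of `z`
gives the generating function `∑ C_n^λ(ξ) zⁿ = (1 - 2ξz + z²)^{-λ}` for small `z`, the
rearrangement being licensed by absolute convergence. The right-hand side is holomorphic on the
unit disc, so the expansion holds on the whole disc. Finally
`∑ ((n + λ)/λ) C_n^λ(ξ) zⁿ = (1 + (z/λ) d/dz) (1 - 2ξz + z²)^{-λ} = (1 - z²)(1 - 2ξz + z²)^{-λ-1}`.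
-/

open Complex Filter Finset Topology
open scoped ENNReal NNReal

theorem Ring.choose_add_natCast_sub_one_eq_Gamma {m : ℝ} (hm : ∀ k : ℕ, m ≠ -k) (k : ℕ) :
    Ring.choose ((m : ℂ) + k - 1) k = (Real.Gamma (k + m) / (Real.Gamma m * k.factorial) : ℝ) := by
  have hm' : ∀ k : ℕ, (m : ℂ) ≠ -k := fun k h => hm k (by exact_mod_cast h)
  have hpoch := Ring.factorial_nsmul_multichoose_eq_ascPochhammer (m : ℂ) k
  rw [Polynomial.ascPochhammer_smeval_eq_eval, ← Complex.Gamma_add_nat_div_Gamma_eq _ hm',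
    nsmul_eq_mul, eq_div_iff (Complex.Gamma_ne_zero hm')] at hpoch
  rw [← Ring.multichoose_eq, ofReal_div, ofReal_mul, ← Gamma_ofReal, ← Gamma_ofReal, ofReal_add,
    add_comm, ofReal_natCast, ← hpoch]
  field_simp [Complex.Gamma_ne_zero hm', Nat.factorial_ne_zero]
  norm_cast

lemma gegenbauerC_eq_sum_choose {m : ℝ} (hm : ∀ k : ℕ, m ≠ -k) (n : ℕ) (ξ : ℝ) :
    (gegenbauerC m n ξ : ℂ) = ∑ j ∈ range (n / 2 + 1),
      Ring.choose ((m : ℂ) + (n - j : ℕ) - 1) (n - j) * (-1) ^ j * (2 * ξ) ^ (n - 2 * j) *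
        (n - j).choose j := by
  rw [gegenbauerC, ofReal_sum]
  refine sum_congr rfl fun j hj => ?_
  have hj : j ≤ n - j := by simp at hj; omega
  rw [Ring.choose_add_natCast_sub_one_eq_Gamma hm, Nat.cast_sub (hj.trans (Nat.sub_le n j)),
    ← Nat.choose_mul_factorial_mul_factorial hj, show n - j - j = n - 2 * j by omega]
  have hchoose : ((n - j).choose j : ℂ) ≠ 0 := Nat.cast_ne_zero.2 (Nat.choose_pos hj).ne'
  push_cast
  field_simp [Nat.factorial_ne_zero]

lemma Complex.mul_mem_slitPlane_of_re_pos {u v : ℂ} (hu : 0 < u.re) (hv : 0 < v.re) :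
    u * v ∈ slitPlane := by
  have hu0 : u ≠ 0 := fun h => by simp [h] at hu
  have hv0 : v ≠ 0 := fun h => by simp [h] at hv
  obtain ⟨hu₁, hu₂⟩ := abs_lt.1 (abs_arg_lt_pi_div_two_iff.2 (Or.inl hu))
  obtain ⟨hv₁, hv₂⟩ := abs_lt.1 (abs_arg_lt_pi_div_two_iff.2 (Or.inl hv))
  rw [mem_slitPlane_iff_arg, arg_mul hu0 hv0 ⟨by linarith, by linarith [Real.pi_pos]⟩]
  exact ⟨by linarith [Real.pi_pos], mul_ne_zero hu0 hv0⟩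

/-- `1 - 2ξz + z² = (1 - αz)(1 - ᾱz)` with `α = ξ + i√(1 - ξ²)` on the unit circle, and both
factors lie in the right half-plane. -/
lemma one_sub_two_mul_add_sq_mem_slitPlane {ξ : ℝ} (hξ : |ξ| ≤ 1) {z : ℂ} (hz : ‖z‖ < 1) :
    1 - 2 * ξ * z + z ^ 2 ∈ slitPlane := by
  set α : ℂ := ξ + Real.sqrt (1 - ξ ^ 2) * I
  have hα : normSq α = 1 := by
    rw [normSq_add_mul_I, Real.sq_sqrt (by nlinarith [abs_le.1 hξ])]
    ring
  have hαnorm : ‖α‖ = 1 := by rw [norm_def, hα, Real.sqrt_one]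
  have hre : ∀ γ : ℂ, ‖γ‖ = 1 → 0 < (1 - γ * z).re := fun γ hγ => by
    have : ‖γ * z‖ < 1 := by rwa [norm_mul, hγ, one_mul]
    rw [sub_re, one_re]
    linarith [re_le_norm (γ * z)]
  have hfactor : 1 - 2 * ξ * z + z ^ 2 = (1 - α * z) * (1 - (starRingEnd ℂ) α * z) := by
    have hsum : α + (starRingEnd ℂ) α = 2 * ξ := by
      rw [add_conj]; simp [α]
    have hprod : α * (starRingEnd ℂ) α = 1 := by rw [mul_conj, hα, ofReal_one]
    linear_combination z * hsum - z ^ 2 * hprod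
  rw [hfactor]
  exact mul_mem_slitPlane_of_re_pos (hre α hαnorm) (hre _ (by rw [norm_conj, hαnorm]))

lemma hasSum_pow_mul_pow_mul_choose {R : Type*} [CommSemiring R] [TopologicalSpace R]
    (x y : R) (k : ℕ) : HasSum (fun j => x ^ j * y ^ (k - j) * k.choose j) ((x + y) ^ k) := by
  rw [add_pow]
  refine hasSum_sum_of_ne_finset_zero fun j hj => ?_
  rw [Nat.choose_eq_zero_of_lt (by simp at hj; omega), Nat.cast_zero, mul_zero]

theorem hasSum_prod_of_hasSum_mul_pow_mul_sub {b : ℕ → ℂ} {x z F : ℂ}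
    (hb : Summable fun k => ‖b k‖ * ((‖z‖ + ‖x‖) * ‖z‖) ^ k)
    (hF : HasSum (fun k => b k * (z * (x - z)) ^ k) F) :
    HasSum (fun p : ℕ × ℕ =>
      b p.1 * z ^ p.1 * ((-z) ^ p.2 * x ^ (p.1 - p.2) * p.1.choose p.2)) F := by
  have hrow : ∀ k, HasSum (fun j => b k * z ^ k * ((-z) ^ j * x ^ (k - j) * k.choose j))
      (b k * (z * (x - z)) ^ k) := fun k => by
    have h := (hasSum_pow_mul_pow_mul_choose (-z) x k).mul_left (b k * z ^ k)
    rwa [neg_add_eq_sub, mul_assoc (b k), ← mul_pow] at h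
  have hnorm_row : ∀ k, HasSum (fun j => ‖b k * z ^ k * ((-z) ^ j * x ^ (k - j) * k.choose j)‖)
      (‖b k‖ * ((‖z‖ + ‖x‖) * ‖z‖) ^ k) := fun k => by
    have h := (hasSum_pow_mul_pow_mul_choose ‖z‖ ‖x‖ k).mul_left (‖b k‖ * ‖z‖ ^ k)
    rw [mul_assoc ‖b k‖, ← mul_pow, mul_comm ‖z‖] at h
    simpa using h
  have hsummable : Summable fun p : ℕ × ℕ =>
      b p.1 * z ^ p.1 * ((-z) ^ p.2 * x ^ (p.1 - p.2) * p.1.choose p.2) := by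
    refine Summable.of_norm ((summable_prod_of_nonneg fun _ => norm_nonneg _).2
      ⟨fun k => (hnorm_row k).summable, ?_⟩)
    simpa only [(hnorm_row _).tsum_eq] using hb
  exact (hsummable.hasSum.prod_fiberwise hrow).unique hF ▸ hsummable.hasSum

theorem hasSum_pow_mul_sum_of_hasSum_mul_pow_mul_sub {b : ℕ → ℂ} {x z F : ℂ}
    (hb : Summable fun k => ‖b k‖ * ((‖z‖ + ‖x‖) * ‖z‖) ^ k)
    (hF : HasSum (fun k => b k * (z * (x - z)) ^ k) F) :
    HasSum (fun n => (∑ j ∈ range (n / 2 + 1),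
      b (n - j) * (-1) ^ j * x ^ (n - 2 * j) * (n - j).choose j) * z ^ n) F := by
  set t : ℕ × ℕ → ℂ := fun p => b p.1 * z ^ p.1 * ((-z) ^ p.2 * x ^ (p.1 - p.2) * p.1.choose p.2)
  have hinj : Function.Injective fun p : ℕ × ℕ => (p.1 + p.2, p.2) := by
    rintro ⟨k, j⟩ ⟨k', j'⟩ h
    simp only [Prod.mk.injEq] at h ⊢
    omega
  -- regroup the terms by the total degree `n = k + j` in `z`
  have hdeg : HasSum (fun p : ℕ × ℕ => t (p.1 - p.2, p.2)) F := by
    refine (hinj.hasSum_iff fun ⟨n, j⟩ hnj => ?_).1 (by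
      simpa [Function.comp_def] using hasSum_prod_of_hasSum_mul_pow_mul_sub hb hF)
    have hnj : n < j := by
      by_contra h
      exact hnj ⟨(n - j, j), Prod.ext (Nat.sub_add_cancel (not_lt.1 h)) rfl⟩
    simp [t, Nat.choose_eq_zero_of_lt (show n - j < j by omega)]
  refine hdeg.prod_fiberwise fun n => ?_
  rw [sum_mul]
  convert hasSum_sum_of_ne_finset_zero (L := SummationFilter.unconditional ℕ)
    (s := range (n / 2 + 1)) (f := fun j => t (n - j, j)) fun j hj => ?_ using 1
  · refine sum_congr rfl fun j hj => ?_
    have hjn : j ≤ n := by simp at hj; omega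
    simp only [t]
    rw [neg_pow, ← pow_sub_mul_pow z hjn, show n - j - j = n - 2 * j by omega]
    ring
  · simp [t, Nat.choose_eq_zero_of_lt (show n - j < j by simp at hj; omega)]

theorem hasSum_gegenbauerC_mul_pow_of_norm_lt {m : ℝ} (hm : ∀ k : ℕ, m ≠ -k) {ξ : ℝ} {z : ℂ}
    (hz : (‖z‖ + 2 * |ξ|) * ‖z‖ < 1) :
    HasSum (fun n => (gegenbauerC m n ξ : ℂ) * z ^ n) ((1 - 2 * ξ * z + z ^ 2) ^ (-(m : ℂ))) := by
  have hbin := one_div_one_sub_cpow_hasFPowerSeriesOnBall_zero (m : ℂ)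
  have hnorm : ‖(2 * ξ : ℂ)‖ = 2 * |ξ| := by simp
  have hb : Summable fun k : ℕ =>
      ‖Ring.choose ((m : ℂ) + k - 1) k‖ * ((‖z‖ + ‖(2 * ξ : ℂ)‖) * ‖z‖) ^ k := by
    have hρ := (ENNReal.coe_lt_one_iff.2 (Real.toNNReal_lt_one.2 hz)).trans_le hbin.r_le
    have h0 : 0 ≤ (‖z‖ + 2 * |ξ|) * ‖z‖ := by positivity
    simpa [FormalMultilinearSeries.ofScalars_norm, h0] using
      FormalMultilinearSeries.summable_norm_mul_pow _ hρ
  have hu : ‖z * (2 * ξ - z)‖ < 1 := by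
    refine lt_of_le_of_lt ?_ hz
    rw [norm_mul, mul_comm]
    gcongr
    exact (norm_sub_le _ _).trans (by rw [hnorm, add_comm])
  have hF := hbin.hasSum (y := z * (2 * ξ - z))
    (by rw [mem_eball_zero_iff, ← ofReal_norm, ENNReal.ofReal_lt_one]; exact hu)
  simp only [FormalMultilinearSeries.ofScalars_apply_eq, smul_eq_mul, zero_add] at hF
  convert hasSum_pow_mul_sum_of_hasSum_mul_pow_mul_sub hb hF using 1
  · ext n
    rw [gegenbauerC_eq_sum_choose hm]
  · rw [cpow_neg, ← one_div]
    ring_nf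

theorem DifferentiableOn.hasFPowerSeriesOnBall_of_hasFPowerSeriesAt {E : Type*}
    [NormedAddCommGroup E] [NormedSpace ℂ E] [CompleteSpace E] {f : ℂ → E}
    {p : FormalMultilinearSeries ℂ ℂ E} {c : ℂ} {r : ℝ≥0∞}
    (hd : DifferentiableOn ℂ f (Metric.eball c r)) (hp : HasFPowerSeriesAt f p c) (hr : 0 < r) :
    HasFPowerSeriesOnBall f p c r := by
  have hsmall : ∀ R : ℝ≥0, 0 < R → (R : ℝ≥0∞) < r → HasFPowerSeriesOnBall f p c R := by
    intro R hR hRr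
    have hsub : Metric.closedBall c R ⊆ Metric.eball c r := by
      rw [← Metric.closedEBall_coe]
      exact fun y hy => Metric.mem_eball.2 ((Metric.mem_closedEBall.1 hy).trans_lt hRr)
    have hcauchy := (hd.mono hsub).hasFPowerSeriesOnBall hR
    exact hp.eq_formalMultilinearSeries hcauchy.hasFPowerSeriesAt ▸ hcauchy
  refine ⟨ENNReal.le_of_forall_pos_nnreal_lt fun R hR hRr => (hsmall R hR hRr).r_le, hr,
    fun {y} hy => ?_⟩
  obtain ⟨R, hyR, hRr⟩ := ENNReal.lt_iff_exists_nnreal_btwn.1 (Metric.mem_eball.1 hy)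
  exact (hsmall R (pos_of_gt (by simpa using hyR)) hRr).hasSum (Metric.mem_eball.2 hyR)

theorem hasFPowerSeriesOnBall_gegenbauerC {m : ℝ} (hm : ∀ k : ℕ, m ≠ -k) {ξ : ℝ} (hξ : |ξ| ≤ 1) :
    HasFPowerSeriesOnBall (fun z : ℂ => (1 - 2 * ξ * z + z ^ 2) ^ (-(m : ℂ)))
      (FormalMultilinearSeries.ofScalars ℂ fun n => (gegenbauerC m n ξ : ℂ)) 0 1 := by
  refine DifferentiableOn.hasFPowerSeriesOnBall_of_hasFPowerSeriesAt (fun z hz => ?_) ?_ one_pos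
  · rw [mem_eball_zero_iff, ← ofReal_norm, ENNReal.ofReal_lt_one] at hz
    exact ((by fun_prop : DifferentiableAt ℂ (fun z : ℂ => 1 - 2 * ξ * z + z ^ 2) z).cpow_const
      (one_sub_two_mul_add_sq_mem_slitPlane hξ hz)).differentiableWithinAt
  · have hsmall : Tendsto (fun z : ℂ => (‖z‖ + 2 * |ξ|) * ‖z‖) (𝓝 0) (𝓝 0) := by
      simpa using (by fun_prop : Continuous fun z : ℂ => (‖z‖ + 2 * |ξ|) * ‖z‖).tendsto 0
    rw [hasFPowerSeriesAt_iff]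
    filter_upwards [hsmall.eventually (gt_mem_nhds one_pos)] with z hz
    simpa [FormalMultilinearSeries.coeff_ofScalars, mul_comm] using
      hasSum_gegenbauerC_mul_pow_of_norm_lt hm hz

theorem HasFPowerSeriesOnBall.hasSum_smul_deriv {𝕜 : Type*} [NontriviallyNormedField 𝕜]
    {E : Type*} [NormedAddCommGroup E] [NormedSpace 𝕜 E] [CompleteSpace E] {f : 𝕜 → E}
    {p : FormalMultilinearSeries 𝕜 𝕜 E} {r : ℝ≥0∞} (h : HasFPowerSeriesOnBall f p 0 r) {z : 𝕜}
    (hz : ‖z‖ₑ < r) : HasSum (fun n : ℕ => ((n : 𝕜) * z ^ n) • p.coeff n) (z • deriv f z) := by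
  have hderiv := (h.fderiv.hasSum (Metric.mem_eball.2 (by simpa using hz))).mapL
    (ContinuousLinearMap.apply 𝕜 E 1)
  simp only [zero_add, ContinuousLinearMap.apply_apply,
    FormalMultilinearSeries.apply_eq_pow_smul_coeff, FunLike.coe_smul, Pi.smul_apply,
    FormalMultilinearSeries.derivSeries_coeff_one, fderiv_apply_one_eq_deriv] at hderiv
  have hshift := (hasSum_nat_add_iff (f := fun n : ℕ => ((n : 𝕜) * z ^ n) • p.coeff n) 1).1
    ((hderiv.const_smul z).congr_fun fun n => by
      rw [← Nat.cast_smul_eq_nsmul 𝕜, smul_smul, smul_smul]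
      congr 1
      push_cast
      ring)
  simpa using hshift

lemma hasDerivAt_one_sub_two_mul_add_sq_cpow (ξ : ℝ) {z : ℂ}
    (hz : 1 - 2 * ξ * z + z ^ 2 ∈ slitPlane) (c : ℂ) :
    HasDerivAt (fun w : ℂ => (1 - 2 * ξ * w + w ^ 2) ^ c)
      (c * (1 - 2 * ξ * z + z ^ 2) ^ (c - 1) * (2 * z - 2 * ξ)) z := by
  refine HasDerivAt.cpow_const ?_ hz
  refine ((((hasDerivAt_id' z).const_mul (2 * (ξ : ℂ))).const_sub 1).fun_add
    (hasDerivAt_pow 2 z)).congr_deriv ?_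
  norm_num
  ring

lemma one_sub_two_mul_add_sq_cpow_add_mul_deriv {lam ξ : ℝ} (hlam : lam ≠ 0) {z : ℂ}
    (hQ : 1 - 2 * ξ * z + z ^ 2 ≠ 0) :
    (1 - 2 * ξ * z + z ^ 2) ^ (-(lam : ℂ)) +
        z * (-(lam : ℂ) * (1 - 2 * ξ * z + z ^ 2) ^ (-(lam : ℂ) - 1) * (2 * z - 2 * ξ)) / lam =
      (1 - z ^ 2) / (1 - 2 * ξ * z + z ^ 2) ^ ((lam : ℂ) + 1) := by
  set Q : ℂ := 1 - 2 * ξ * z + z ^ 2 with hQ_def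
  have hneg : Q ^ (-(lam : ℂ) - 1) = (Q ^ ((lam : ℂ) + 1))⁻¹ := by rw [← cpow_neg, neg_add']
  have hsplit : Q ^ (-(lam : ℂ)) = Q ^ (-(lam : ℂ) - 1) * Q := by
    conv_lhs => rw [show -(lam : ℂ) = (-(lam : ℂ) - 1) + 1 by ring]
    rw [cpow_add _ _ hQ, cpow_one]
  have hlam' : (lam : ℂ) ≠ 0 := ofReal_ne_zero.2 hlam
  rw [hsplit, hneg, hQ_def]
  field_simp
  ring

/-- Poisson kernel expansion: for `|z| < 1`, `|ξ| < 1`, `λ > 0`,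
`(1 - z²)/(1 - 2ξz + z²)^{λ+1} = ∑ ((j+λ)/λ) C_j^λ(ξ) z^j`. -/
theorem poisson_kernel_gegenbauer (lam : ℝ) (hlam : 0 < lam) (ξ : ℝ) (hξ : |ξ| < 1)
    (z : ℂ) (hz : ‖z‖ < 1) :
    HasSum (fun j : ℕ => ((((j : ℝ) + lam) / lam : ℝ) : ℂ) * ((gegenbauerC lam j ξ : ℝ) : ℂ) * z ^ j)
      ((1 - z ^ 2) / (1 - 2 * (ξ : ℂ) * z + z ^ 2) ^ ((lam : ℂ) + 1)) := by
  have hps := hasFPowerSeriesOnBall_gegenbauerC (m := lam)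
    (fun k h => by linarith [h ▸ hlam, (k.cast_nonneg : (0 : ℝ) ≤ k)]) hξ.le
  have hz' : ‖z‖ₑ < 1 := by simpa [← ofReal_norm] using hz
  have hQ := one_sub_two_mul_add_sq_mem_slitPlane hξ.le hz
  have hG := hps.hasSum (mem_eball_zero_iff.2 hz')
  have hzG' := hps.hasSum_smul_deriv hz'
  simp only [FormalMultilinearSeries.ofScalars_apply_eq, FormalMultilinearSeries.coeff_ofScalars,
    smul_eq_mul, zero_add, (hasDerivAt_one_sub_two_mul_add_sq_cpow ξ hQ _).deriv] at hG hzG'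
  rw [← one_sub_two_mul_add_sq_cpow_add_mul_deriv hlam.ne' (slitPlane_ne_zero hQ)]
  refine (hG.add (hzG'.div_const lam)).congr_fun fun n => ?_
  have hlam' : (lam : ℂ) ≠ 0 := ofReal_ne_zero.2 hlam.ne'
  push_cast
  field_simp
  ring
end
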